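/- Equivalence of lossy and standard coverability for k-NRCS: let N be a k-NRCS and define the lossy step relation ⇝ by C ⇝ D iff there exists C₀ with C₀ ≤_is C and C₀ → D. Then for all configurations C, C' of N: C covers C' with respect to the standard step relation → (i.e. there exists C'' with C →* C'' and C' ≤_is C'') if and only if C covers C' with respect to the lossy step relation ⇝. -/

import Mathlib

/-- Finite rooted ordered representation of finite rooted *unordered* labelled trees.
Unorderedness is handled by comparing trees up to permutation of children. -/
inductive STree (Q : Type) : Type
  | node (label : Q) (children : List (STree Q)) : STree Q

namespace STree

variable {Q : Type}

/-- The label of the root. -/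
def rootLabel : STree Q → Q
  | node a _ => a

/-- The children of the root. -/
def children : STree Q → List (STree Q)
  | node _ ts => ts

end STree

mutual
  /-- Number of nodes. -/
  def STree.size {Q : Type} : STree Q → ℕ
    | .node _ ts => 1 + STree.sizeL ts
  /-- Total number of nodes of a list of trees. -/
  def STree.sizeL {Q : Type} : List (STree Q) → ℕ
    | [] => 0
    | t :: ts => STree.size t + STree.sizeL ts
end

mutual
  /-- Height (a single node has height 0). -/
  def STree.height {Q : Type} : STree Q → ℕ
    | .node _ ts => STree.heightL ts
  /-- One plus the maximal height of a list of trees (0 for the empty list). -/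
  def STree.heightL {Q : Type} : List (STree Q) → ℕ
    | [] => 0
    | t :: ts => max (STree.height t + 1) (STree.heightL ts)
end

namespace STree

end STree

mutual
  /-- `TreeLe C C'` is the induced-subtree ordering `C ≤_is C'`: `C` is obtained from `C'`
  by deleting whole subtrees (equivalently, there is a root-preserving, label-preserving
  injection of the nodes of `C` into the nodes of `C'` such that two nodes are adjacent in
  `C` iff their images are adjacent in `C'`). -/
  inductive TreeLe {Q : Type} : STree Q → STree Q → Prop
    | node {a : Q} {ts us : List (STree Q)} :
        ForestLe ts us → TreeLe (.node a ts) (.node a us)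

  /-- An (unordered) embedding of a list of trees into another: an injection matching each
  tree on the left with a distinct tree on the right that dominates it w.r.t. `TreeLe`. -/
  inductive ForestLe {Q : Type} : List (STree Q) → List (STree Q) → Prop
    | nil (us : List (STree Q)) : ForestLe [] us
    | cons {t u : STree Q} {ts us : List (STree Q)} :
        TreeLe t u → ForestLe ts us → ForestLe (t :: ts) (u :: us)
    | skip {u : STree Q} {ts us : List (STree Q)} :
        ForestLe ts us → ForestLe ts (u :: us)
    | permR {ts us us' : List (STree Q)} :
        ForestLe ts us → us.Perm us' → ForestLe ts us'
end

mutual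
  /-- Equality of trees as finite rooted *unordered* labelled trees. -/
  inductive TreeEquiv {Q : Type} : STree Q → STree Q → Prop
    | node {a : Q} {ts us : List (STree Q)} :
        ForestEquiv ts us → TreeEquiv (.node a ts) (.node a us)

  /-- Lists of trees matched bijectively (up to permutation) by `TreeEquiv`. -/
  inductive ForestEquiv {Q : Type} : List (STree Q) → List (STree Q) → Prop
    | nil : ForestEquiv [] []
    | cons {t u : STree Q} {ts us : List (STree Q)} :
        TreeEquiv t u → ForestEquiv ts us → ForestEquiv (t :: ts) (u :: us)
    | permR {ts us us' : List (STree Q)} :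
        ForestEquiv ts us → us.Perm us' → ForestEquiv ts us'
end

/-- `HasPath ps t` : there is a path from the root of `t` (inclusive) whose successive
labels are exactly the (nonempty) list `ps`. -/
inductive HasPath {Q : Type} : List Q → STree Q → Prop
  | single (p : Q) (ts : List (STree Q)) : HasPath [p] (.node p ts)
  | cons (p : Q) {ps : List Q} {ts : List (STree Q)} {t : STree Q} :
      t ∈ ts → HasPath ps t → HasPath (p :: ps) (.node p ts)

/-- `mkChain q qs` is the path-shaped tree with labels `q, qs...`. -/
def mkChain {Q : Type} : Q → List Q → STree Q
  | q, [] => .node q []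
  | q, r :: rest => .node q [mkChain r rest]

/-- Attach the (possibly empty) fresh chain labelled `qs` as a new child. -/
def attachChain {Q : Type} : List Q → List (STree Q) → List (STree Q)
  | [], ts => ts
  | r :: rest, ts => mkChain r rest :: ts

/-- Application of an update transition `(p_0,…,p_i) →u (q_0,…,q_j)` (given as the two label
lists) to a configuration: fire along a root path labelled `p_0,…,p_i`, relabel the common
prefix, and either create fresh nodes labelled `q_{i+1},…,q_j` (if `i ≤ j`) or delete the
subtree rooted at `v_{j+1}` (if `j < i`). -/
inductive UStep {Q : Type} : List Q → List Q → STree Q → STree Q → Prop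
  | last (p q : Q) (rest : List Q) (ts : List (STree Q)) :
      UStep [p] (q :: rest) (.node p ts) (.node q (attachChain rest ts))
  | delete (p q : Q) {ps : List Q} (hps : ps ≠ []) {t : STree Q} (l r : List (STree Q)) :
      HasPath ps t →
      UStep (p :: ps) [q] (.node p (l ++ t :: r)) (.node q (l ++ r))
  | go (p q : Q) {ps qs : List Q} (hps : ps ≠ []) (hqs : qs ≠ []) {t t' : STree Q}
      (l r : List (STree Q)) :
      UStep ps qs t t' →
      UStep (p :: ps) (q :: qs) (.node p (l ++ t :: r)) (.node q (l ++ t' :: r))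

/-- Application of a reset transition `(p_0,…,p_i) →r,x (q_0,…,q_i)` to a configuration:
fire along a root path labelled `p_0,…,p_i`, relabel it to `q_0,…,q_i`, and delete every
subtree rooted at a child of the last path node whose label is `x`. -/
inductive RStep {Q : Type} [DecidableEq Q] : List Q → Q → List Q → STree Q → STree Q → Prop
  | last (p q x : Q) (ts : List (STree Q)) :
      RStep [p] x [q] (.node p ts) (.node q (ts.filter (fun t => t.rootLabel ≠ x)))
  | go (p q x : Q) {ps qs : List Q} (hps : ps ≠ []) {t t' : STree Q} (l r : List (STree Q)) :
      RStep ps x qs t t' →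
      RStep (p :: ps) x (q :: qs) (.node p (l ++ t :: r)) (.node q (l ++ t' :: r))

/-- A transition of a `k`-NRCS : either an update transition or a reset transition,
presented by its label lists. -/
inductive NTrans (Q : Type) : Type
  | upd (ps qs : List Q) : NTrans Q
  | rst (ps : List Q) (x : Q) (qs : List Q) : NTrans Q

/-- A `k`-NRCS `(Q, δ_u, δ_r)` : a finite set of update transitions
`δ_u ⊆ ⋃_{1 ≤ i,j ≤ k+1} Q^i × Q^j` and a finite set of reset transitions
`δ_r ⊆ ⋃_{1 ≤ i ≤ k} Q^i × Q × Q^i` (the state set is the ambient type `Q`). -/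
structure NRCS (Q : Type) [DecidableEq Q] (k : ℕ) where
  update : Finset (List Q × List Q)
  reset : Finset (List Q × Q × List Q)
  update_wf : ∀ t ∈ update, 1 ≤ t.1.length ∧ t.1.length ≤ k + 1 ∧
      1 ≤ t.2.length ∧ t.2.length ≤ k + 1
  reset_wf : ∀ t ∈ reset, 1 ≤ t.1.length ∧ t.1.length ≤ k ∧ t.2.2.length = t.1.length

namespace NRCS

variable {Q : Type} [DecidableEq Q] {k : ℕ}

/-- Membership of a transition in an NRCS. -/
def hasTrans (N : NRCS Q k) : NTrans Q → Prop
  | .upd ps qs => (ps, qs) ∈ N.update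
  | .rst ps x qs => (ps, x, qs) ∈ N.reset

/-- `C →_t C'` : a step via the particular transition `t`. -/
def TransStep : NTrans Q → STree Q → STree Q → Prop
  | .upd ps qs, C, C' => UStep ps qs C C'
  | .rst ps x qs, C, C' => RStep ps x qs C C'

/-- The step relation `C → C'` of the NRCS `N`. -/
def Step (N : NRCS Q k) (C C' : STree Q) : Prop :=
  ∃ t : NTrans Q, N.hasTrans t ∧ TransStep t C C'

/-- Reachability `C →* C'` (reflexive-transitive closure of the step relation). -/
def Reaches (N : NRCS Q k) : STree Q → STree Q → Prop :=
  Relation.ReflTransGen N.Step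

/-- The lossy step relation: first delete some whole subtrees, then take a standard step. -/
def LossyStep (N : NRCS Q k) (C D : STree Q) : Prop :=
  ∃ C₀ : STree Q, TreeLe C₀ C ∧ N.Step C₀ D

/-- Lossy reachability. -/
def LossyReaches (N : NRCS Q k) : STree Q → STree Q → Prop :=
  Relation.ReflTransGen N.LossyStep

end NRCS

/-! The induced-subtree order `≤_is` is a preorder, and every step is upward compatible with it:
if `C₀ ≤_is C` and `C₀ → D`, then `C → D'` for some `D' ≥_is D`, since the path a transition
fires along survives in the larger tree and whatever it creates, relabels or deletes there stays
above its counterpart. A lossy run is therefore dominated step by step by a standard run, and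
the converse holds because every step is a lossy step. Working with forests is easiest through
the characterisation of `ForestLe ts us` as pointwise domination of `ts` by a sub-multiset
of `us`. -/

namespace List

variable {α β γ : Type*} {R : α → β → Prop}

theorem Forall₂.exists_mem {l : List α} {m : List β} {a : α} (h : Forall₂ R l m) (ha : a ∈ l) :
    ∃ b ∈ m, R a b := by
  induction h with
  | nil => cases ha
  | @cons a' b l m hab _ ih =>
    rcases mem_cons.1 ha with rfl | ha
    · exact ⟨b, mem_cons_self, hab⟩
    · obtain ⟨b', hb', h⟩ := ih ha
      exact ⟨b', mem_cons_of_mem b hb', h⟩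

theorem Forall₂.exists_of_sublist {l₁ l₂ : List α} {m₂ : List β} (hs : l₁ <+ l₂)
    (h : Forall₂ R l₂ m₂) : ∃ m₁, Forall₂ R l₁ m₁ ∧ m₁ <+ m₂ := by
  induction hs generalizing m₂ with
  | slnil => exact ⟨[], .nil, nil_sublist m₂⟩
  | cons a _ ih =>
    obtain _ | ⟨_, h⟩ := h
    obtain ⟨m₁, hf, hs⟩ := ih h
    exact ⟨m₁, hf, hs.cons _⟩
  | cons_cons a _ ih =>
    obtain _ | ⟨hab, h⟩ := h
    obtain ⟨m₁, hf, hs⟩ := ih h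
    exact ⟨_ :: m₁, .cons hab hf, hs.cons_cons _⟩

theorem Forall₂.exists_of_subperm {l₁ l₂ : List α} {m₂ : List β} (hs : l₁ <+~ l₂)
    (h : Forall₂ R l₂ m₂) : ∃ m₁, Forall₂ R l₁ m₁ ∧ m₁ <+~ m₂ := by
  obtain ⟨l, hp, hs⟩ := hs
  obtain ⟨m, hf, hsm⟩ := h.exists_of_sublist hs
  obtain ⟨m₁, hf₁, hp₁⟩ := perm_comp_forall₂ hp.symm hf
  exact ⟨m₁, hf₁, hp₁.subperm.trans hsm.subperm⟩

theorem Forall₂.comp_of_mem {S : β → γ → Prop} {T : α → γ → Prop} {l₁ : List α} {l₂ : List β}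
    {l₃ : List γ} (hRST : ∀ a ∈ l₁, ∀ b c, R a b → S b c → T a c) (h₁ : Forall₂ R l₁ l₂)
    (h₂ : Forall₂ S l₂ l₃) : Forall₂ T l₁ l₃ := by
  induction h₁ generalizing l₃ with
  | nil => cases h₂; exact .nil
  | cons hab _ ih =>
    obtain _ | ⟨hbc, h₂⟩ := h₂
    exact .cons (hRST _ mem_cons_self _ _ hab hbc)
      (ih (fun a ha => hRST a (mem_cons_of_mem _ ha)) h₂)

end List

section Trees

open List

variable {Q : Type}

namespace ForestLe

theorem exists_forall₂_subperm : ∀ {ts us : List (STree Q)}, ForestLe ts us →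
    ∃ vs, Forall₂ TreeLe ts vs ∧ vs <+~ us
  | _, _, .nil _ => ⟨[], .nil, nil_subperm⟩
  | _, _, .cons (u := u) htu h =>
    let ⟨vs, hf, hs⟩ := exists_forall₂_subperm h
    ⟨u :: vs, .cons htu hf, (subperm_cons u).2 hs⟩
  | _, _, .skip h =>
    let ⟨vs, hf, hs⟩ := exists_forall₂_subperm h
    ⟨vs, hf, hs.trans (sublist_cons_self _ _).subperm⟩
  | _, _, .permR h hp =>
    let ⟨vs, hf, hs⟩ := exists_forall₂_subperm h
    ⟨vs, hf, hs.trans hp.subperm⟩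

theorem of_forall₂_sublist {ts vs us : List (STree Q)} (hf : Forall₂ TreeLe ts vs)
    (hs : vs <+ us) : ForestLe ts us := by
  induction hs generalizing ts with
  | slnil => cases hf; exact .nil []
  | cons _ _ ih => exact .skip (ih hf)
  | cons_cons _ _ ih =>
    obtain _ | ⟨htu, hf⟩ := hf
    exact .cons htu (ih hf)

theorem of_forall₂_subperm {ts vs us : List (STree Q)} (hf : Forall₂ TreeLe ts vs)
    (hs : vs <+~ us) : ForestLe ts us := by
  obtain ⟨us', hp, hs'⟩ := subperm_iff.1 hs
  exact .permR (of_forall₂_sublist hf hs') hp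

theorem _root_.forestLe_iff {ts us : List (STree Q)} :
    ForestLe ts us ↔ ∃ vs, Forall₂ TreeLe ts vs ∧ vs <+~ us :=
  ⟨exists_forall₂_subperm, fun ⟨_, hf, hs⟩ => of_forall₂_subperm hf hs⟩

end ForestLe

theorem TreeLe.refl : ∀ t : STree Q, TreeLe t t
  | .node _ ts => .node <| forestLe_iff.2
      ⟨ts, forall₂_same.2 fun t _ => TreeLe.refl t, Subperm.refl ts⟩

theorem TreeLe.trans : ∀ {a b c : STree Q}, TreeLe a b → TreeLe b c → TreeLe a c
  | .node _ ts, _, _, .node hab, .node hbc => by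
    obtain ⟨vs, hts, hvs⟩ := forestLe_iff.1 hab
    obtain ⟨ws, hus, hws⟩ := forestLe_iff.1 hbc
    obtain ⟨ws', hvs', hws'⟩ := hus.exists_of_subperm hvs
    have hcomp : ∀ t ∈ ts, ∀ v w, TreeLe t v → TreeLe v w → TreeLe t w :=
      fun t _ _ _ htv hvw => TreeLe.trans htv hvw
    exact .node <| forestLe_iff.2 ⟨ws', hts.comp_of_mem hcomp hvs', hws'.trans hws⟩

theorem TreeLe.rootLabel_eq {t u : STree Q} (h : TreeLe t u) : t.rootLabel = u.rootLabel := by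
  cases h; rfl

namespace ForestLe

theorem exists_mem {ts us : List (STree Q)} {t : STree Q} (h : ForestLe ts us) (ht : t ∈ ts) :
    ∃ u ∈ us, TreeLe t u := by
  obtain ⟨vs, hf, hs⟩ := forestLe_iff.1 h
  obtain ⟨u, hu, htu⟩ := hf.exists_mem ht
  exact ⟨u, hs.subset hu, htu⟩

theorem perm_left {ts ts' us : List (STree Q)} (hp : ts ~ ts') (h : ForestLe ts us) :
    ForestLe ts' us := by
  obtain ⟨vs, hf, hs⟩ := forestLe_iff.1 h
  obtain ⟨vs', hf', hp'⟩ := perm_comp_forall₂ hp.symm hf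
  exact forestLe_iff.2 ⟨vs', hf', hp'.subperm.trans hs⟩

theorem exists_split {l r us : List (STree Q)} {t : STree Q} (h : ForestLe (l ++ t :: r) us) :
    ∃ l' u r', us = l' ++ u :: r' ∧ TreeLe t u ∧ ForestLe (l ++ r) (l' ++ r') := by
  obtain ⟨_, hf, hs⟩ := forestLe_iff.1 (h.perm_left perm_middle)
  obtain ⟨u, vs, htu, hvs, rfl⟩ := forall₂_cons_left_iff.1 hf
  obtain ⟨l', r', rfl⟩ := append_of_mem (hs.subset mem_cons_self)
  have hsub : vs <+~ l' ++ r' := (subperm_cons u).1 (hs.trans perm_middle.subperm)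
  exact ⟨l', u, r', rfl, htu, forestLe_iff.2 ⟨vs, hvs, hsub⟩⟩

theorem insert_middle {l r l' r' : List (STree Q)} {t u : STree Q}
    (h : ForestLe (l ++ r) (l' ++ r')) (htu : TreeLe t u) :
    ForestLe (l ++ t :: r) (l' ++ u :: r') :=
  ((cons htu h).perm_left perm_middle.symm).permR perm_middle.symm

theorem attachChain (qs : List Q) {ts us : List (STree Q)} (h : ForestLe ts us) :
    ForestLe (_root_.attachChain qs ts) (_root_.attachChain qs us) := by
  cases qs with
  | nil => exact h
  | cons q qs => exact .cons (TreeLe.refl _) h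

theorem filter_rootLabel (p : Q → Prop) [DecidablePred p] {ts us : List (STree Q)}
    (h : ForestLe ts us) :
    ForestLe (ts.filter fun t => p t.rootLabel) (us.filter fun t => p t.rootLabel) := by
  obtain ⟨vs, hf, hs⟩ := forestLe_iff.1 h
  refine forestLe_iff.2 ⟨vs.filter fun t => p t.rootLabel, rel_filter ?_ hf, hs.filter _⟩
  intro t v htv
  simp [htv.rootLabel_eq]

end ForestLe

theorem HasPath.mono {ps : List Q} {t u : STree Q} (h : HasPath ps t) (htu : TreeLe t u) :
    HasPath ps u := by
  induction h generalizing u with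
  | single p ts => cases htu; exact .single ..
  | cons p hmem _ ih =>
    cases htu with
    | node hf =>
      obtain ⟨v, hv, htv⟩ := hf.exists_mem hmem
      exact .cons p hv (ih htv)

theorem UStep.upward_compatible {ps qs : List Q} {C₀ C D : STree Q} (h : UStep ps qs C₀ D)
    (hle : TreeLe C₀ C) : ∃ D', UStep ps qs C D' ∧ TreeLe D D' := by
  induction h generalizing C with
  | last p q rest ts =>
    obtain ⟨hf⟩ := hle
    exact ⟨_, .last p q rest _, .node (hf.attachChain rest)⟩
  | delete p q hps l r hpath =>
    obtain ⟨hf⟩ := hle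
    obtain ⟨l', u, r', rfl, htu, hf'⟩ := hf.exists_split
    exact ⟨_, .delete p q hps l' r' (hpath.mono htu), .node hf'⟩
  | go p q hps hqs l r _ ih =>
    obtain ⟨hf⟩ := hle
    obtain ⟨l', u, r', rfl, htu, hf'⟩ := hf.exists_split
    obtain ⟨u', hstep, hle'⟩ := ih htu
    exact ⟨_, .go p q hps hqs l' r' hstep, .node (hf'.insert_middle hle')⟩

theorem RStep.upward_compatible [DecidableEq Q] {ps qs : List Q} {x : Q} {C₀ C D : STree Q}
    (h : RStep ps x qs C₀ D) (hle : TreeLe C₀ C) : ∃ D', RStep ps x qs C D' ∧ TreeLe D D' := by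
  induction h generalizing C with
  | last p q x ts =>
    obtain ⟨hf⟩ := hle
    exact ⟨_, .last p q x _, .node (hf.filter_rootLabel (· ≠ x))⟩
  | go p q x hps l r _ ih =>
    obtain ⟨hf⟩ := hle
    obtain ⟨l', u, r', rfl, htu, hf'⟩ := hf.exists_split
    obtain ⟨u', hstep, hle'⟩ := ih htu
    exact ⟨_, .go p q x hps l' r' hstep, .node (hf'.insert_middle hle')⟩

namespace NRCS

variable [DecidableEq Q] {k : ℕ} {N : NRCS Q k}

theorem Step.upward_compatible {C₀ C D : STree Q} (h : N.Step C₀ D) (hle : TreeLe C₀ C) :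
    ∃ D', N.Step C D' ∧ TreeLe D D' := by
  obtain ⟨_ | _, ht, hstep⟩ := h
  · obtain ⟨D', hstep', hle'⟩ := UStep.upward_compatible hstep hle
    exact ⟨D', ⟨_, ht, hstep'⟩, hle'⟩
  · obtain ⟨D', hstep', hle'⟩ := RStep.upward_compatible hstep hle
    exact ⟨D', ⟨_, ht, hstep'⟩, hle'⟩

theorem Reaches.lossyReaches {C D : STree Q} (h : N.Reaches C D) : N.LossyReaches C D :=
  Relation.ReflTransGen.mono (fun E _ hEF => ⟨E, TreeLe.refl E, hEF⟩) C D h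

theorem LossyReaches.exists_reaches_treeLe {C D : STree Q} (h : N.LossyReaches C D) :
    ∃ D', N.Reaches C D' ∧ TreeLe D D' := by
  induction h with
  | refl => exact ⟨C, .refl, TreeLe.refl C⟩
  | tail _ hstep ih =>
    obtain ⟨D', hreach, hle⟩ := ih
    obtain ⟨E₀, hE₀, hstep₀⟩ := hstep
    obtain ⟨E', hstep', hle'⟩ := hstep₀.upward_compatible (hE₀.trans hle)
    exact ⟨E', hreach.tail hstep', hle'⟩

end NRCS

end Trees

/-- Equivalence of lossy and standard coverability for `k`-NRCS:
let `N` be a `k`-NRCS and define the lossy step relation `⇝` by `C ⇝ D` iff there exists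
`C₀` with `C₀ ≤_is C` and `C₀ → D`. Then for all configurations `C, C'` of `N`:
`C` covers `C'` w.r.t. the standard step relation (there exists `C''` with `C →* C''` and
`C' ≤_is C''`) iff `C` covers `C'` w.r.t. the lossy step relation. -/
theorem nrcs_lossy_coverability_iff
    {Q : Type} [DecidableEq Q] [Fintype Q] {k : ℕ} (hk : 1 ≤ k)
    (N : NRCS Q k) (C C' : STree Q) (hC : C.height ≤ k) (hC' : C'.height ≤ k) :
    (∃ C'' : STree Q, N.Reaches C C'' ∧ TreeLe C' C'') ↔
    (∃ C'' : STree Q, N.LossyReaches C C'' ∧ TreeLe C' C'') := by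
  constructor
  · rintro ⟨C'', hreach, hle⟩
    exact ⟨C'', hreach.lossyReaches, hle⟩
  · rintro ⟨C'', hreach, hle⟩
    obtain ⟨D, hD, hC''D⟩ := hreach.exists_reaches_treeLe
    exact ⟨D, hD, hle.trans hC''D⟩
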